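/- arXiv:2203.05363 — 2 statements merged into one kernel-verified Lean document; each statement's English description precedes it below -/
import Mathlib

section
/- The function (x,y) ↦ x^α / y^(α-1) is jointly convex on (0,∞) × (0,∞) for any α ≥ 1. -/
open Set

/-!
The map `(x, t) ↦ x ^ α / t ^ (α - 1)` is `t * (x / t) ^ α`, the perspective of the convex
function `x ↦ x ^ α`, and the perspective `(x, t) ↦ t • f (t⁻¹ • x)` of any convex `f` is convex:
a convex combination of `(x₁, t₁)` and `(x₂, t₂)` with weights `a, b` is sent by `x / t` to the
convex combination of `x₁ / t₁` and `x₂ / t₂` with weights proportional to `a * t₁` and `b * t₂`.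
-/

section Perspective

variable {E : Type*} [AddCommGroup E] [Module ℝ E]

theorem inv_smul_add_smul_eq_perspective_weights {t₁ t₂ a b : ℝ} (ht₁ : t₁ ≠ 0) (ht₂ : t₂ ≠ 0)
    (hT : a * t₁ + b * t₂ ≠ 0) (x₁ x₂ : E) :
    (a * t₁ + b * t₂)⁻¹ • (a • x₁ + b • x₂) =
      (a * t₁ / (a * t₁ + b * t₂)) • t₁⁻¹ • x₁ + (b * t₂ / (a * t₁ + b * t₂)) • t₂⁻¹ • x₂ := by
  simp only [smul_add, smul_smul]
  congr 2 <;> field_simp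

theorem ConvexOn.perspective {β : Type*} [AddCommGroup β] [PartialOrder β] [Module ℝ β]
    [PosSMulMono ℝ β] {s : Set E} {f : E → β} (hf : ConvexOn ℝ s f) :
    ConvexOn ℝ {p : E × ℝ | 0 < p.2 ∧ p.2⁻¹ • p.1 ∈ s} (fun p ↦ p.2 • f (p.2⁻¹ • p.1)) := by
  have key : ∀ ⦃x₁ t₁⦄, 0 < t₁ → t₁⁻¹ • x₁ ∈ s → ∀ ⦃x₂ t₂⦄, 0 < t₂ → t₂⁻¹ • x₂ ∈ s →
      ∀ ⦃a b : ℝ⦄, 0 ≤ a → 0 ≤ b → a + b = 1 →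
      0 < a * t₁ + b * t₂ ∧ (a * t₁ + b * t₂)⁻¹ • (a • x₁ + b • x₂) ∈ s ∧
      (a * t₁ + b * t₂) • f ((a * t₁ + b * t₂)⁻¹ • (a • x₁ + b • x₂)) ≤
        a • t₁ • f (t₁⁻¹ • x₁) + b • t₂ • f (t₂⁻¹ • x₂) := by
    intro x₁ t₁ ht₁ hx₁ x₂ t₂ ht₂ hx₂ a b ha hb hab
    have hT : 0 < a * t₁ + b * t₂ := by simpa using convex_Ioi (0 : ℝ) ht₁ ht₂ ha hb hab
    set T := a * t₁ + b * t₂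
    have hw₁ : 0 ≤ a * t₁ / T := by positivity
    have hw₂ : 0 ≤ b * t₂ / T := by positivity
    have hw : a * t₁ / T + b * t₂ / T = 1 := by rw [← add_div, div_self hT.ne']
    rw [inv_smul_add_smul_eq_perspective_weights ht₁.ne' ht₂.ne' hT.ne']
    refine ⟨hT, hf.1 hx₁ hx₂ hw₁ hw₂ hw, ?_⟩
    calc T • f ((a * t₁ / T) • t₁⁻¹ • x₁ + (b * t₂ / T) • t₂⁻¹ • x₂)
        ≤ T • ((a * t₁ / T) • f (t₁⁻¹ • x₁) + (b * t₂ / T) • f (t₂⁻¹ • x₂)) :=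
          smul_le_smul_of_nonneg_left (hf.2 hx₁ hx₂ hw₁ hw₂ hw) hT.le
      _ = a • t₁ • f (t₁⁻¹ • x₁) + b • t₂ • f (t₂⁻¹ • x₂) := by
          simp only [smul_add, smul_smul]
          congr 2 <;> field_simp
  refine ⟨?_, ?_⟩
  · rintro ⟨x₁, t₁⟩ ⟨ht₁, hx₁⟩ ⟨x₂, t₂⟩ ⟨ht₂, hx₂⟩ a b ha hb hab
    exact (key ht₁ hx₁ ht₂ hx₂ ha hb hab).imp_right And.left
  · rintro ⟨x₁, t₁⟩ ⟨ht₁, hx₁⟩ ⟨x₂, t₂⟩ ⟨ht₂, hx₂⟩ a b ha hb hab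
    exact (key ht₁ hx₁ ht₂ hx₂ ha hb hab).2.2

end Perspective

theorem Real.mul_rpow_inv_mul {x t : ℝ} (hx : 0 ≤ x) (ht : 0 < t) (α : ℝ) :
    t * (t⁻¹ * x) ^ α = x ^ α / t ^ (α - 1) := by
  rw [Real.mul_rpow (inv_nonneg.2 ht.le) hx, Real.inv_rpow ht.le, Real.rpow_sub_one ht.ne']
  field_simp

/-- The function `(x, y) ↦ x^α / y^(α-1)` is jointly convex on `(0,∞) × (0,∞)`
for any real `α ≥ 1`. -/
theorem convexOn_rpow_div_rpow (α : ℝ) (hα : 1 ≤ α) :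
    ConvexOn ℝ (Set.Ioi (0 : ℝ) ×ˢ Set.Ioi (0 : ℝ))
      (fun p : ℝ × ℝ => p.1 ^ α / p.2 ^ (α - 1)) := by
  have hsub : Ioi (0 : ℝ) ×ˢ Ioi 0 ⊆ {p : ℝ × ℝ | 0 < p.2 ∧ p.2⁻¹ • p.1 ∈ Ici 0} :=
    fun p ⟨hx, ht⟩ ↦ ⟨ht, mem_Ici.2 (smul_nonneg (inv_nonneg.2 ht.le) hx.le)⟩
  refine ((convexOn_rpow hα).perspective.subset hsub
    ((convex_Ioi 0).prod (convex_Ioi 0))).congr ?_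
  rintro ⟨x, t⟩ ⟨hx, ht⟩
  exact Real.mul_rpow_inv_mul hx.le ht α
end

section
/- For the multinomial logit probabilities pᵢ = exp(zᵢ)/∑ⱼexp(zⱼ), the matrix T with Tᵢᵢ = pᵢ(1−pᵢ) and Tᵢⱼ = −pᵢpⱼ (i≠j) is positive semi-definite and satisfies T ≼ (1/2)·(I_c − (1/c)·𝟏_c 𝟏_cᵀ), where 𝟏_c is the all-ones vector in ℝ^c. -/
/-!
The quadratic form of `diagonal p - vecMulVec p p` at `x` is the variance of `x` under the
distribution `p`, hence nonnegative. By Popoviciu's inequality this variance is at most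
`((max x - min x) / 2) ^ 2`, and `(x i - x j) ^ 2 ≤ 2 ((x i - m) ^ 2 + (x j - m) ^ 2)` with `m` the
mean of `x` bounds that by half the quadratic form `∑ k, (x k - m) ^ 2` of the centering matrix.
-/

open Finset Matrix

section WeightedVariance

variable {ι : Type*} [Fintype ι]

theorem sum_mul_sub_sq (p x : ι → ℝ) (t : ℝ) :
    ∑ i, p i * (x i - t) ^ 2
      = ∑ i, p i * x i ^ 2 - 2 * t * ∑ i, p i * x i + t ^ 2 * ∑ i, p i := by
  simp only [mul_sum, ← sum_sub_distrib, ← sum_add_distrib]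
  exact sum_congr rfl fun i _ => by ring

variable {p : ι → ℝ}

theorem sum_mul_sq_sub_sq_eq_sum_mul_sub_sq (hp : ∑ i, p i = 1) (x : ι → ℝ) :
    ∑ i, p i * x i ^ 2 - (∑ i, p i * x i) ^ 2 = ∑ i, p i * (x i - ∑ j, p j * x j) ^ 2 := by
  rw [sum_mul_sub_sq, hp]
  ring

theorem sum_mul_sq_sub_sq_nonneg (hp₀ : ∀ i, 0 ≤ p i) (hp : ∑ i, p i = 1) (x : ι → ℝ) :
    0 ≤ ∑ i, p i * x i ^ 2 - (∑ i, p i * x i) ^ 2 := by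
  rw [sum_mul_sq_sub_sq_eq_sum_mul_sub_sq hp]
  exact sum_nonneg fun i _ => mul_nonneg (hp₀ i) (sq_nonneg _)

/-- Popoviciu's inequality for a finitely supported distribution; compare
`ProbabilityTheory.variance_le_sq_of_bounded`. -/
theorem sum_mul_sq_sub_sq_le_sq (hp₀ : ∀ i, 0 ≤ p i) (hp : ∑ i, p i = 1) {x : ι → ℝ}
    {a b : ℝ} (hx : ∀ i, x i ∈ Set.Icc a b) :
    ∑ i, p i * x i ^ 2 - (∑ i, p i * x i) ^ 2 ≤ ((b - a) / 2) ^ 2 := by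
  have h : 0 ≤ ∑ i, p i * ((b - x i) * (x i - a)) :=
    sum_nonneg fun i _ => mul_nonneg (hp₀ i) (mul_nonneg (by linarith [(hx i).2])
      (by linarith [(hx i).1]))
  have h_eq : ∑ i, p i * ((b - x i) * (x i - a))
      = (a + b) * ∑ i, p i * x i - ∑ i, p i * x i ^ 2 - a * b * ∑ i, p i := by
    simp only [mul_sum, ← sum_sub_distrib]
    exact sum_congr rfl fun i _ => by ring
  rw [h_eq, hp] at h
  nlinarith [sq_nonneg (∑ i, p i * x i - (a + b) / 2)]

theorem sq_sub_le_two_mul_sum_sq_sub (x : ι → ℝ) (i j : ι) :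
    (x i - x j) ^ 2 ≤ 2 * (∑ k, x k ^ 2 - (Fintype.card ι : ℝ)⁻¹ * (∑ k, x k) ^ 2) := by
  have : Nonempty ι := ⟨i⟩
  set m := (∑ k, x k) / Fintype.card ι
  have h_centered : ∑ k, x k ^ 2 - (Fintype.card ι : ℝ)⁻¹ * (∑ k, x k) ^ 2
      = ∑ k, (x k - m) ^ 2 := by
    have h := sum_mul_sub_sq (fun _ => (1 : ℝ)) x m
    simp only [one_mul, sum_const, card_univ, nsmul_eq_mul, mul_one] at h
    have hι : (Fintype.card ι : ℝ) ≠ 0 := Nat.cast_ne_zero.mpr Fintype.card_ne_zero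
    rw [h]
    simp only [m]
    field_simp
    ring
  rw [h_centered]
  rcases eq_or_ne i j with rfl | hij
  · simpa using sum_nonneg fun k _ => sq_nonneg (x k - m)
  · classical
    have h_pair : (x i - m) ^ 2 + (x j - m) ^ 2 ≤ ∑ k, (x k - m) ^ 2 := by
      rw [← sum_pair (f := fun k => (x k - m) ^ 2) hij]
      exact sum_le_sum_of_subset_of_nonneg (subset_univ _) fun k _ _ => sq_nonneg _
    nlinarith [sq_nonneg (x i + x j - 2 * m)]

end WeightedVariance

section CurvatureMatrix

variable {ι : Type*} [Fintype ι] [DecidableEq ι] {p : ι → ℝ}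

noncomputable def centeringMatrix (ι : Type*) [Fintype ι] [DecidableEq ι] : Matrix ι ι ℝ :=
  1 - (Fintype.card ι : ℝ)⁻¹ • of fun _ _ => 1

theorem dotProduct_diagonal_sub_vecMulVec_mulVec (p x : ι → ℝ) :
    x ⬝ᵥ ((diagonal p - vecMulVec p p) *ᵥ x)
      = ∑ i, p i * x i ^ 2 - (∑ i, p i * x i) ^ 2 := by
  rw [sub_mulVec, dotProduct_sub, vecMulVec_mulVec, dotProduct_smul]
  simp only [dotProduct, mulVec_diagonal, op_smul_eq_mul, mul_comm (x _), mul_assoc, ← sq]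

theorem isHermitian_diagonal_sub_vecMulVec (p : ι → ℝ) :
    (diagonal p - vecMulVec p p).IsHermitian :=
  (isHermitian_diagonal p).sub (by simpa using (posSemidef_vecMulVec_self_star p).isHermitian)

theorem posSemidef_diagonal_sub_vecMulVec (hp₀ : ∀ i, 0 ≤ p i) (hp : ∑ i, p i = 1) :
    (diagonal p - vecMulVec p p).PosSemidef :=
  .of_dotProduct_mulVec_nonneg (isHermitian_diagonal_sub_vecMulVec p) fun x => by
    rw [star_trivial, dotProduct_diagonal_sub_vecMulVec_mulVec]
    exact sum_mul_sq_sub_sq_nonneg hp₀ hp x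

theorem dotProduct_centeringMatrix_mulVec (x : ι → ℝ) :
    x ⬝ᵥ (centeringMatrix ι *ᵥ x)
      = ∑ i, x i ^ 2 - (Fintype.card ι : ℝ)⁻¹ * (∑ i, x i) ^ 2 := by
  simp only [centeringMatrix, sub_mulVec, one_mulVec, smul_mulVec, dotProduct_sub,
    dotProduct_smul]
  simp only [dotProduct, mulVec, of_apply, one_mul, smul_eq_mul, ← sum_mul]
  ring_nf

theorem isHermitian_centeringMatrix : (centeringMatrix ι).IsHermitian :=
  isHermitian_one.sub (IsHermitian.smul (by ext; simp) (.all _))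

theorem posSemidef_half_smul_centeringMatrix_sub (hp₀ : ∀ i, 0 ≤ p i) (hp : ∑ i, p i = 1) :
    ((1 / 2 : ℝ) • centeringMatrix ι - (diagonal p - vecMulVec p p)).PosSemidef := by
  refine .of_dotProduct_mulVec_nonneg ((isHermitian_centeringMatrix.smul (.all _)).sub
      (isHermitian_diagonal_sub_vecMulVec p)) fun x => ?_
  rw [star_trivial, sub_mulVec, dotProduct_sub, smul_mulVec, dotProduct_smul,
    dotProduct_centeringMatrix_mulVec, dotProduct_diagonal_sub_vecMulVec_mulVec,
    smul_eq_mul, sub_nonneg]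
  have hι : (univ : Finset ι).Nonempty := nonempty_of_sum_ne_zero (hp ▸ one_ne_zero)
  obtain ⟨imax, -, h_max⟩ := exists_max_image univ x hι
  obtain ⟨imin, -, h_min⟩ := exists_min_image univ x hι
  calc ∑ i, p i * x i ^ 2 - (∑ i, p i * x i) ^ 2
      ≤ ((x imax - x imin) / 2) ^ 2 :=
        sum_mul_sq_sub_sq_le_sq hp₀ hp fun k => ⟨h_min k (mem_univ k), h_max k (mem_univ k)⟩
    _ ≤ _ := by linarith [sq_sub_le_two_mul_sum_sq_sub x imax imin]

end CurvatureMatrix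

theorem Real.sum_exp_div_sum_exp {ι : Type*} [Fintype ι] [Nonempty ι] (z : ι → ℝ) :
    ∑ i, Real.exp (z i) / ∑ j, Real.exp (z j) = 1 := by
  rw [← sum_div, div_self (sum_pos (fun j _ => Real.exp_pos (z j)) univ_nonempty).ne']

/-- For the multinomial logit probabilities `pᵢ = exp(zᵢ)/∑ⱼ exp(zⱼ)`, the matrix
`T = diag(p) − p pᵀ` is positive semi-definite and satisfies
`T ≼ (1/2)·(I_c − (1/c)·𝟏𝟏ᵀ)` in the Loewner order. -/
theorem multinomial_curvature_matrix_bound (c : ℕ) (hc : 0 < c) (z : Fin c → ℝ)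
    (p : Fin c → ℝ) (hp : ∀ i, p i = Real.exp (z i) / ∑ j, Real.exp (z j))
    (T : Matrix (Fin c) (Fin c) ℝ)
    (hT : T = Matrix.of fun i j => if i = j then p i * (1 - p i) else -(p i * p j)) :
    T.PosSemidef ∧
      (((1 / 2 : ℝ) • ((1 : Matrix (Fin c) (Fin c) ℝ)
          - ((c : ℝ))⁻¹ • (Matrix.of fun _ _ => (1 : ℝ)))) - T).PosSemidef := by
  have : Nonempty (Fin c) := ⟨⟨0, hc⟩⟩
  have hp₀ : ∀ i, 0 ≤ p i := fun i => hp i ▸ by positivity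
  have hp₁ : ∑ i, p i = 1 := by simp only [hp]; exact Real.sum_exp_div_sum_exp z
  have hT_eq : T = diagonal p - vecMulVec p p := by
    subst hT
    ext i j
    rcases eq_or_ne i j with rfl | hij
    · simp [vecMulVec, mul_sub]
    · simp [vecMulVec, hij]
  have hc_card : (c : ℝ) = Fintype.card (Fin c) := by simp
  rw [hT_eq, hc_card]
  exact ⟨posSemidef_diagonal_sub_vecMulVec hp₀ hp₁,
    posSemidef_half_smul_centeringMatrix_sub hp₀ hp₁⟩
end
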